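/- Suppose there exist class K∞ functions α₁, α₂, a class K function σ, and κ > 0 such that along any pair of trajectories x, x̃ (with states x(t), x̃(t) ∈ ℝⁿ, history segments x_t, x̃_t, and inputs u, ũ), a continuous functional V satisfies α₁(|x(t) − x̃(t)|) ≤ V(x_t, x̃_t) ≤ α₂(‖x_t − x̃_t‖) and D⁺V(x_t, x̃_t) ≤ -κ V(x_t, x̃_t) + σ(‖u − ũ‖_{[0,t]}) for all t ≥ 0. Then |x(t) − x̃(t)| ≤ β(‖x₀ − x̃₀‖, t) + γ(‖u − ũ‖_{[0,t]}) for all t ≥ 0, where β(r,t) = α₁⁻¹(2 e^{-κ t} α₂(r)) and γ(r) = α₁⁻¹((2/κ) σ(r)). -/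

import Mathlib

/-!
By the comparison principle for the upper right Dini derivative, the dissipation inequality
gives `v t ≤ e^{-κ t} v 0 + σ (U t) / κ`: on `[0, t]` the forcing `σ ∘ U` is at most `σ (U t)`,
because it is nondecreasing. Writing the right-hand side as `a + b ≤ max (2a) (2b)` and
applying the increasing inverse `α₁⁻¹` to `α₁ ‖x t - xt t‖ ≤ a + b` bounds `‖x t - xt t‖` by
`max (α₁⁻¹ (2a)) (α₁⁻¹ (2b)) ≤ α₁⁻¹ (2a) + α₁⁻¹ (2b)`.
-/

open Set Filter Topology

theorem eventually_slope_lt_of_limsup_lt {v : ℝ → ℝ} {t r : ℝ}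
    (hr : limsup (fun h => (v (t + h) - v t) / h) (𝓝[>] 0) < r)
    (hneg : limsup (fun h => (v (t + h) - v t) / h) (𝓝[>] 0) < 0) :
    ∀ᶠ z in 𝓝[>] t, slope v t z < r := by
  -- an unbounded limsup is `0` in `ℝ`, so a negative one is genuine
  have hbdd : IsBoundedUnder (· ≤ ·) (𝓝[>] 0) fun h => (v (t + h) - v t) / h := by
    by_contra h
    exact hneg.ne (Real.limsup_of_not_isBoundedUnder h)
  rw [← add_zero t, ← map_add_left_nhdsGT, eventually_map]
  filter_upwards [eventually_lt_of_limsup_lt hr hbdd] with h hh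
  rwa [add_zero, slope_def_field, add_sub_cancel_left]

theorem eventually_slope_max_const_lt {f : ℝ → ℝ} {x M r : ℝ}
    (hf : Tendsto f (𝓝[>] x) (𝓝 (f x)))
    (hslope : M ≤ f x → ∀ᶠ z in 𝓝[>] x, slope f x z < r) (hr : f x ≤ M → 0 < r) :
    ∀ᶠ z in 𝓝[>] x, slope (fun s => max (f s) M) x z < r := by
  rcases lt_trichotomy (f x) M with hlt | heq | hgt
  · filter_upwards [hf.eventually (gt_mem_nhds hlt)] with z hz
    simpa [slope_def_field, max_eq_right hz.le, max_eq_right hlt.le] using hr hlt.le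
  · filter_upwards [hslope heq.ge, self_mem_nhdsWithin] with z hz (hxz : x < z)
    rw [slope_def_field, div_lt_iff₀ (sub_pos.2 hxz)] at hz ⊢
    rw [max_eq_right heq.le, ← max_sub_sub_right, max_lt_iff, ← heq, sub_self]
    exact ⟨hz, mul_pos (hr heq.le) (sub_pos.2 hxz)⟩
  · filter_upwards [hslope hgt.le, hf.eventually (lt_mem_nhds hgt)] with z hz hMz
    simpa [slope_def_field, max_eq_left hMz.le, max_eq_left hgt.le] using hz

theorem hasDerivAt_exp_mul_sub_add (κ a p q s : ℝ) :
    HasDerivAt (fun s => Real.exp (-κ * (s - a)) * p + q) (-κ * Real.exp (-κ * (s - a)) * p) s := by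
  have := ((((hasDerivAt_id s).sub_const a).const_mul (-κ)).exp.mul_const p).add_const q
  simpa [mul_comm] using this

theorem le_exp_mul_add_div_of_limsup_slope_le {v : ℝ → ℝ} {a b κ c : ℝ} (hκ : 0 < κ)
    (hc : 0 ≤ c) (hv : ContinuousOn v (Icc a b)) (hva : 0 ≤ v a)
    (hdini : ∀ t ∈ Ico a b, limsup (fun h => (v (t + h) - v t) / h) (𝓝[>] 0) ≤ -κ * v t + c) :
    ∀ t ∈ Icc a b, v t ≤ Real.exp (-κ * (t - a)) * v a + c / κ := by
  intro t ht
  refine le_of_forall_pos_le_add fun ε hε => ?_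
  -- compare `max v M` with `B`, where the floor `M` lies strictly between `c / κ` and `B`;
  -- above `M` the upper Dini derivative of `v` is negative, hence not a junk value
  set M := c / κ + ε / 2 with hM
  set B := fun s => Real.exp (-κ * (s - a)) * v a + (c / κ + ε)
  have hκc : κ * (c / κ) = c := mul_div_cancel₀ c hκ.ne'
  have hκM : κ * M = c + κ * ε / 2 := by rw [hM, mul_add, hκc]; ring
  have hcκ : 0 ≤ c / κ := div_nonneg hc hκ.le
  have hκε : 0 < κ * ε := mul_pos hκ hε
  have hB : ∀ s, HasDerivAt B (-κ * Real.exp (-κ * (s - a)) * v a) s :=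
    hasDerivAt_exp_mul_sub_add κ a (v a) _
  have hslope : ∀ x ∈ Ico a b, ∀ r, -κ * max (v x) M + c + κ * ε / 2 < r →
      ∃ᶠ z in 𝓝[>] x, slope (fun s => max (v s) M) x z < r := by
    intro x hx r hr
    refine (eventually_slope_max_const_lt ?_ (fun hMx => ?_) (fun hxM => ?_)).frequently
    · exact (hv x (Ico_subset_Icc_self hx)).mono_of_mem_nhdsWithin (Icc_mem_nhdsGT_of_mem hx)
    · rw [max_eq_left hMx] at hr
      have hlim := hdini x hx
      have hκv := mul_le_mul_of_nonneg_left hMx hκ.le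
      exact eventually_slope_lt_of_limsup_lt (by linarith) (by linarith)
    · rw [max_eq_right hxM] at hr
      linarith
  have hfence : ∀ s ∈ Icc a b, max (v s) M ≤ B s :=
    image_le_of_liminf_slope_right_lt_deriv_boundary' (hv.sup continuousOn_const) hslope
      (by simp only [B, sub_self, mul_zero, Real.exp_zero, one_mul]; apply max_le <;> linarith)
      (fun s _ => (hB s).continuousAt.continuousWithinAt) (fun s _ => (hB s).hasDerivWithinAt)
      (fun s _ hs => by simp only [B] at hs ⊢; rw [hs]; linarith)
  linarith [le_max_left (v t) M, hfence t ht]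

theorem StrictMonoOn.le_of_le_of_rightInvOn {α β : ℝ → ℝ} {S T : Set ℝ} (hα : StrictMonoOn α S)
    (hβ : RightInvOn β α T) (hβS : MapsTo β T S) {r s : ℝ} (hr : r ∈ S) (hs : s ∈ T)
    (h : α r ≤ s) : r ≤ β s := by
  rwa [← hα.le_iff_le hr (hβS hs), hβ hs]

theorem StrictMonoOn.le_add_of_le_add_of_rightInvOn {α β : ℝ → ℝ} (hα : StrictMonoOn α (Ici 0))
    (hβ : RightInvOn β α (Ici 0)) (hβS : MapsTo β (Ici 0) (Ici 0)) {r a b : ℝ} (hr : 0 ≤ r)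
    (ha : 0 ≤ a) (hb : 0 ≤ b) (h : α r ≤ a + b) : r ≤ β (2 * a) + β (2 * b) := by
  have hmax : a + b ≤ max (2 * a) (2 * b) := by
    rcases le_total a b with hab | hab
    · exact (by linarith : a + b ≤ 2 * b).trans (le_max_right _ _)
    · exact (by linarith : a + b ≤ 2 * a).trans (le_max_left _ _)
  have hβa : 0 ≤ β (2 * a) := hβS (by simpa using ha)
  have hβb : 0 ≤ β (2 * b) := hβS (by simpa using hb)
  rcases max_choice (2 * a) (2 * b) with hc | hc <;> rw [hc] at hmax
  · linarith [hα.le_of_le_of_rightInvOn hβ hβS hr (by simpa using ha) (h.trans hmax)]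
  · linarith [hα.le_of_le_of_rightInvOn hβ hβS hr (by simpa using hb) (h.trans hmax)]

theorem deltaISS_of_LKF_general
    {n : ℕ} (x xt : ℝ → EuclideanSpace ℝ (Fin n))
    (v : ℝ → ℝ) (d₀ : ℝ) (U : ℝ → ℝ)
    (α₁ α₂ σ α₁inv : ℝ → ℝ) (κ : ℝ) (hκ : 0 < κ)
    -- α₁ is of class K∞, with inverse α₁inv on [0,∞)
    (hα₁mono : StrictMonoOn α₁ (Ici 0))
    (hα₁0 : α₁ 0 = 0)
    (hinv₂ : ∀ s ∈ Ici (0:ℝ), α₁ (α₁inv s) = s)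
    (hinv₃ : Set.MapsTo α₁inv (Ici 0) (Ici 0))
    -- σ is of class K
    (hσmono : StrictMonoOn σ (Ici 0))
    (hσ0 : σ 0 = 0)
    -- data: d₀ = ‖x₀ − x̃₀‖ ≥ 0, U t = ‖u − ũ‖_{[0,t]} nonneg and nondecreasing
    (hU : ∀ t ∈ Ici (0:ℝ), 0 ≤ U t)
    (hUmono : MonotoneOn U (Ici 0))
    -- v is continuous and satisfies the sandwich and dissipation inequalities
    (hvcont : ContinuousOn v (Ici 0))
    (hsand : ∀ t ∈ Ici (0:ℝ), α₁ ‖x t - xt t‖ ≤ v t)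
    (hv0 : v 0 ≤ α₂ d₀)
    (hdini : ∀ t ∈ Ici (0:ℝ),
      Filter.limsup (fun h : ℝ => (v (t + h) - v t) / h) (nhdsWithin 0 (Ioi 0))
        ≤ -κ * v t + σ (U t)) :
    ∀ t ∈ Ici (0:ℝ),
      ‖x t - xt t‖ ≤ α₁inv (2 * Real.exp (-κ * t) * α₂ d₀)
        + α₁inv (2 / κ * σ (U t)) := by
  intro t ht
  have hσU : MonotoneOn (σ ∘ U) (Ici 0) := hσmono.monotoneOn.comp hUmono hU
  have hσUt : 0 ≤ σ (U t) := hσ0 ▸ hσmono.monotoneOn self_mem_Ici (hU t ht) (hU t ht)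
  have hv0nonneg : 0 ≤ v 0 :=
    (hα₁0 ▸ hα₁mono.monotoneOn self_mem_Ici (norm_nonneg _) (norm_nonneg _)).trans
      (hsand 0 self_mem_Ici)
  have hvt : v t ≤ Real.exp (-κ * t) * α₂ d₀ + σ (U t) / κ := by
    have hcomp := le_exp_mul_add_div_of_limsup_slope_le hκ hσUt (hvcont.mono Icc_subset_Ici_self)
      hv0nonneg (fun s hs => (hdini s hs.1).trans (by gcongr; exact hσU hs.1 ht hs.2.le)) t
      ⟨ht, le_rfl⟩
    rw [sub_zero] at hcomp
    linarith [mul_le_mul_of_nonneg_left hv0 (Real.exp_pos (-κ * t)).le]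
  have hnorm := hα₁mono.le_add_of_le_add_of_rightInvOn hinv₂ hinv₃ (norm_nonneg _)
    (mul_nonneg (Real.exp_pos _).le (hv0nonneg.trans hv0)) (div_nonneg hσUt hκ.le)
    ((hsand t ht).trans hvt)
  convert hnorm using 3 <;> ring

/-- δISS theorem: if a continuous Lyapunov–Krasovskii-type functional along a pair
of trajectories, abstracted as `v(t) = V(x_t, x̃_t)`, satisfies the sandwich bound
`α₁(‖x(t) − x̃(t)‖) ≤ v(t)`, `v(0) ≤ α₂(‖x₀ − x̃₀‖)` and the dissipation inequality
`D⁺v(t) ≤ -κ v(t) + σ(‖u − ũ‖_{[0,t]})`, with `α₁, α₂` of class K∞ and `σ` of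
class K, then `‖x(t) − x̃(t)‖ ≤ β(‖x₀ − x̃₀‖, t) + γ(‖u − ũ‖_{[0,t]})` with
`β(r,t) = α₁⁻¹(2 e^{-κ t} α₂ r)` and `γ(r) = α₁⁻¹((2/κ) σ r)`.
Here `d₀` stands for `‖x₀ − x̃₀‖` and `U t` stands for `‖u − ũ‖_{[0,t]}`. -/
theorem deltaISS_of_LKF
    {n : ℕ} (x xt : ℝ → EuclideanSpace ℝ (Fin n))
    (v : ℝ → ℝ) (d₀ : ℝ) (U : ℝ → ℝ)
    (α₁ α₂ σ α₁inv : ℝ → ℝ) (κ : ℝ) (hκ : 0 < κ)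
    -- α₁ is of class K∞, with inverse α₁inv on [0,∞)
    (hα₁cont : ContinuousOn α₁ (Ici 0))
    (hα₁mono : StrictMonoOn α₁ (Ici 0))
    (hα₁0 : α₁ 0 = 0)
    (hα₁top : Tendsto α₁ atTop atTop)
    (hinv₁ : ∀ r ∈ Ici (0:ℝ), α₁inv (α₁ r) = r)
    (hinv₂ : ∀ s ∈ Ici (0:ℝ), α₁ (α₁inv s) = s)
    (hinv₃ : Set.MapsTo α₁inv (Ici 0) (Ici 0))
    -- α₂ is of class K∞
    (hα₂cont : ContinuousOn α₂ (Ici 0))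
    (hα₂mono : StrictMonoOn α₂ (Ici 0))
    (hα₂0 : α₂ 0 = 0)
    (hα₂top : Tendsto α₂ atTop atTop)
    -- σ is of class K
    (hσcont : ContinuousOn σ (Ici 0))
    (hσmono : StrictMonoOn σ (Ici 0))
    (hσ0 : σ 0 = 0)
    -- data: d₀ = ‖x₀ − x̃₀‖ ≥ 0, U t = ‖u − ũ‖_{[0,t]} nonneg and nondecreasing
    (hd₀ : 0 ≤ d₀)
    (hU : ∀ t ∈ Ici (0:ℝ), 0 ≤ U t)
    (hUmono : MonotoneOn U (Ici 0))
    -- v is continuous and satisfies the sandwich and dissipation inequalities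
    (hvcont : ContinuousOn v (Ici 0))
    (hsand : ∀ t ∈ Ici (0:ℝ), α₁ ‖x t - xt t‖ ≤ v t)
    (hv0 : v 0 ≤ α₂ d₀)
    (hdini : ∀ t ∈ Ici (0:ℝ),
      Filter.limsup (fun h : ℝ => (v (t + h) - v t) / h) (nhdsWithin 0 (Ioi 0))
        ≤ -κ * v t + σ (U t)) :
    ∀ t ∈ Ici (0:ℝ),
      ‖x t - xt t‖ ≤ α₁inv (2 * Real.exp (-κ * t) * α₂ d₀)
        + α₁inv (2 / κ * σ (U t)) :=
  deltaISS_of_LKF_general x xt v d₀ U α₁ α₂ σ α₁inv κ hκ hα₁mono hα₁0 hinv₂ hinv₃ hσmono hσ0 hU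
    hUmono hvcont hsand hv0 hdini
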